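/- arXiv:2506.24040 — 5 statements merged into one kernel-verified Lean document; each statement's English description precedes it below -/
import Mathlib

section
/- The function g(θ) = (u_π − u_θ)/d(θ) is strictly decreasing on (0, ∞), where u_θ = −b'(θ) is the mean of the tilted distribution τ_θ and d(θ) = θ·b'(θ) − b(θ) is its KL divergence from π. -/
/-!
With `M_k(θ) = ∑ π(u) u^k e^{-θu}` we have `b = log M_0`, `u_θ = M_1 / M_0 = -b'`, and
`b'' = M_2 / M_0 - u_θ²` is the variance of the tilted law, positive since `U` has two points.
As `u_π = -b'(0)` and `b(0) = 0`, `g = (b' - b'(0)) / d` with `d(θ) = θ b'(θ) - (b(θ) - b(0))`.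
Then `d' = θ b''`, so `g' = b'' · (θ b'(0) - (b(θ) - b(0))) / d²`, and the bracket is negative
because the strictly convex `b` lies strictly above its tangent line at `0`; the same convexity
gives `d > 0` on `(0, ∞)`.
-/

open Finset Real

section StrictConvex

variable {b b' b'' : ℝ → ℝ}

theorem mul_deriv_lt_sub_lt_mul_deriv_of_deriv2_pos (hb : ∀ t, HasDerivAt b (b' t) t)
    (hb' : ∀ t, HasDerivAt b' (b'' t) t) (hb'' : ∀ t, 0 < b'' t) {t : ℝ} (ht : 0 < t) :
    t * b' 0 < b t - b 0 ∧ b t - b 0 < t * b' t := by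
  have hconv : StrictConvexOn ℝ Set.univ b := by
    refine StrictMono.strictConvexOn_univ_of_deriv
      (continuous_iff_continuousAt.2 fun t => (hb t).continuousAt) ?_
    rw [show deriv b = b' from funext fun t => (hb t).deriv]
    exact strictMono_of_hasDerivAt_pos hb' hb''
  have hleft := hconv.lt_slope_of_hasDerivAt (Set.mem_univ 0) (Set.mem_univ t) ht (hb 0)
  have hright := hconv.slope_lt_of_hasDerivAt (Set.mem_univ 0) (Set.mem_univ t) ht (hb t)
  rw [slope_def_field, sub_zero] at hleft hright
  exact ⟨(lt_div_iff₀ ht).1 hleft |>.trans_eq' (mul_comm _ _),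
    (div_lt_iff₀ ht).1 hright |>.trans_eq (mul_comm _ _)⟩

theorem strictAntiOn_deriv_sub_div_tangent_gap (hb : ∀ t, HasDerivAt b (b' t) t)
    (hb' : ∀ t, HasDerivAt b' (b'' t) t) (hb'' : ∀ t, 0 < b'' t) :
    StrictAntiOn (fun t => (b' t - b' 0) / (t * b' t - (b t - b 0))) (Set.Ioi 0) := by
  have hgap (t : ℝ) (ht : 0 < t) := mul_deriv_lt_sub_lt_mul_deriv_of_deriv2_pos hb hb' hb'' ht
  have hderiv : ∀ t ∈ Set.Ioi (0 : ℝ), HasDerivAt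
      (fun t => (b' t - b' 0) / (t * b' t - (b t - b 0)))
      (b'' t * (t * b' 0 - (b t - b 0)) / (t * b' t - (b t - b 0)) ^ 2) t := by
    intro t ht
    have hden : HasDerivAt (fun t => t * b' t - (b t - b 0)) (t * b'' t) t := by
      refine (((hasDerivAt_id t).mul (hb' t)).sub ((hb t).sub_const (b 0))).congr_deriv ?_
      simp only [id_eq]
      ring
    refine (((hb' t).sub_const (b' 0)).div hden (sub_pos.2 (hgap t ht).2).ne').congr_deriv ?_
    ring
  refine strictAntiOn_of_deriv_neg (convex_Ioi 0)
    (fun t ht => (hderiv t ht).continuousAt.continuousWithinAt) fun t ht => ?_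
  rw [interior_Ioi] at ht
  rw [(hderiv t ht).deriv]
  exact div_neg_of_neg_of_pos (mul_neg_of_pos_of_neg (hb'' t) (sub_neg.2 (hgap t ht).1))
    (pow_pos (sub_pos.2 (hgap t ht).2) 2)

end StrictConvex

theorem sq_sum_mul_lt_sum_mul_sq_mul_sum {ι : Type*} {s : Finset ι} {w x : ι → ℝ}
    (hw : ∀ i ∈ s, 0 < w i) (hx : ∃ i ∈ s, ∃ j ∈ s, x i ≠ x j) :
    (∑ i ∈ s, w i * x i) ^ 2 < (∑ i ∈ s, w i * x i ^ 2) * ∑ i ∈ s, w i := by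
  obtain ⟨i, hi, j, hj, hij⟩ := hx
  have hlagrange : ∑ k ∈ s, ∑ l ∈ s, w k * w l * (x k - x l) ^ 2
      = 2 * ((∑ k ∈ s, w k * x k ^ 2) * (∑ k ∈ s, w k) - (∑ k ∈ s, w k * x k) ^ 2) := by
    calc ∑ k ∈ s, ∑ l ∈ s, w k * w l * (x k - x l) ^ 2
        = ∑ k ∈ s, ∑ l ∈ s,
            (w k * x k ^ 2 * w l - 2 * (w k * x k * (w l * x l)) + w k * (w l * x l ^ 2)) :=
          sum_congr rfl fun k _ => sum_congr rfl fun l _ => by ring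
      _ = _ := by
          simp only [sum_add_distrib, sum_sub_distrib, ← mul_sum, ← sum_mul]
          ring
  have hterm : ∀ k ∈ s, ∀ l ∈ s, 0 ≤ w k * w l * (x k - x l) ^ 2 := fun k hk l hl =>
    mul_nonneg (mul_pos (hw k hk) (hw l hl)).le (sq_nonneg _)
  have hpos : 0 < ∑ k ∈ s, ∑ l ∈ s, w k * w l * (x k - x l) ^ 2 :=
    sum_pos' (fun k hk => sum_nonneg (hterm k hk))
      ⟨i, hi, sum_pos' (hterm i hi)
        ⟨j, hj, mul_pos (mul_pos (hw i hi) (hw j hj)) (by positivity [sub_ne_zero.2 hij])⟩⟩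
  linarith

section TiltedMoments

variable (U : Finset ℝ) (p : ℝ → ℝ)

noncomputable def tiltedMoment (k : ℕ) (t : ℝ) : ℝ :=
  ∑ u ∈ U, p u * u ^ k * exp (-t * u)

noncomputable def tiltedMean (t : ℝ) : ℝ :=
  tiltedMoment U p 1 t / tiltedMoment U p 0 t

noncomputable def tiltedVariance (t : ℝ) : ℝ :=
  tiltedMoment U p 2 t / tiltedMoment U p 0 t - tiltedMean U p t ^ 2

theorem hasDerivAt_tiltedMoment (k : ℕ) (t : ℝ) :
    HasDerivAt (tiltedMoment U p k) (-tiltedMoment U p (k + 1) t) t := by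
  unfold tiltedMoment
  rw [← sum_neg_distrib]
  refine HasDerivAt.fun_sum fun u _ => ?_
  have hexp : HasDerivAt (fun s => exp (-s * u)) (exp (-t * u) * -u) t :=
    ((hasDerivAt_neg t).mul_const u).exp.congr_deriv (by ring)
  exact (hexp.const_mul (p u * u ^ k)).congr_deriv (by ring)

variable {U p}

theorem tiltedMoment_zero_pos (hU : U.Nonempty) (hp : ∀ u ∈ U, 0 < p u) (t : ℝ) :
    0 < tiltedMoment U p 0 t :=
  sum_pos (fun u hu => by simpa using mul_pos (hp u hu) (exp_pos (-t * u))) hU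

theorem hasDerivAt_log_tiltedMoment_zero {t : ℝ} (ht : tiltedMoment U p 0 t ≠ 0) :
    HasDerivAt (fun s => log (tiltedMoment U p 0 s)) (-tiltedMean U p t) t :=
  ((hasDerivAt_tiltedMoment U p 0 t).log ht).congr_deriv (neg_div _ _)

theorem hasDerivAt_tiltedMean {t : ℝ} (ht : tiltedMoment U p 0 t ≠ 0) :
    HasDerivAt (tiltedMean U p) (-tiltedVariance U p t) t := by
  refine ((hasDerivAt_tiltedMoment U p 1 t).div
    (hasDerivAt_tiltedMoment U p 0 t) ht).congr_deriv ?_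
  unfold tiltedVariance tiltedMean
  field_simp
  ring

theorem tiltedVariance_pos (hp : ∀ u ∈ U, 0 < p u) (hU : ∃ u ∈ U, ∃ v ∈ U, u ≠ v) (t : ℝ) :
    0 < tiltedVariance U p t := by
  have hw : ∀ u ∈ U, 0 < p u * exp (-t * u) := fun u hu => mul_pos (hp u hu) (exp_pos _)
  have hcs : tiltedMoment U p 1 t ^ 2 < tiltedMoment U p 2 t * tiltedMoment U p 0 t := by
    convert sq_sum_mul_lt_sum_mul_sq_mul_sum hw (x := fun u => u) hU using 3 <;>
      exact sum_congr rfl fun u _ => by ring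
  have hM0 := tiltedMoment_zero_pos (let ⟨u, hu, _⟩ := hU; ⟨u, hu⟩) hp t
  have hvar : tiltedVariance U p t =
      (tiltedMoment U p 2 t * tiltedMoment U p 0 t - tiltedMoment U p 1 t ^ 2) /
        tiltedMoment U p 0 t ^ 2 := by
    unfold tiltedVariance tiltedMean
    field_simp
  rw [hvar]
  exact div_pos (sub_pos.2 hcs) (pow_pos hM0 2)

theorem tiltedMoment_zero_at_zero (hsum : ∑ u ∈ U, p u = 1) : tiltedMoment U p 0 0 = 1 := by
  simpa [tiltedMoment] using hsum

theorem tiltedMean_at_zero (hsum : ∑ u ∈ U, p u = 1) :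
    tiltedMean U p 0 = ∑ u ∈ U, u * p u := by
  rw [tiltedMean, tiltedMoment_zero_at_zero hsum, div_one, tiltedMoment]
  exact sum_congr rfl fun u _ => by simp only [pow_one, neg_zero, zero_mul, exp_zero]; ring

end TiltedMoments

theorem impact_ratio_strictAnti_general (U : Finset ℝ)
    (p : ℝ → ℝ) (hpos : ∀ u ∈ U, 0 < p u) (hsum : ∑ u ∈ U, p u = 1)
    (h2 : ∃ u ∈ U, ∃ v ∈ U, u ≠ v)
    (b : ℝ → ℝ) (hb : ∀ t : ℝ, b t = Real.log (∑ u ∈ U, p u * Real.exp (-t * u)))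
    (g : ℝ → ℝ)
    (hg : ∀ t : ℝ, g t =
      ((∑ u ∈ U, u * p u) - (-(deriv b t))) / (t * deriv b t - b t)) :
    StrictAntiOn g (Set.Ioi (0 : ℝ)) := by
  have hM0 : ∀ t, tiltedMoment U p 0 t ≠ 0 := fun t =>
    (tiltedMoment_zero_pos (let ⟨u, hu, _⟩ := h2; ⟨u, hu⟩) hpos t).ne'
  have hb_eq : b = fun t => log (tiltedMoment U p 0 t) := by
    funext t
    simp [hb, tiltedMoment]
  have hb' : ∀ t, HasDerivAt b (-tiltedMean U p t) t := fun t =>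
    hb_eq ▸ hasDerivAt_log_tiltedMoment_zero (hM0 t)
  have hb'' : ∀ t, HasDerivAt (fun t => -tiltedMean U p t) (tiltedVariance U p t) t := fun t =>
    (hasDerivAt_tiltedMean (hM0 t)).neg.congr_deriv (neg_neg _)
  have hb0 : b 0 = 0 := by simp [hb_eq, tiltedMoment_zero_at_zero hsum]
  have hg_eq : g = fun t => (-tiltedMean U p t - -tiltedMean U p 0) /
      (t * -tiltedMean U p t - (b t - b 0)) := by
    funext t
    rw [hg t, (hb' t).deriv, hb0, tiltedMean_at_zero hsum]
    ring
  rw [hg_eq]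
  exact strictAntiOn_deriv_sub_div_tangent_gap hb' hb'' (tiltedVariance_pos hpos h2)

/-- The function `g(θ) = (u_p − u_θ)/d(θ)` is strictly decreasing
on `(0, ∞)`, where `u_θ = −b'(θ)` is the mean of the tilted distribution and
`d(θ) = θ·b'(θ) − b(θ)` is its KL divergence from `p`. -/
theorem impact_ratio_strictAnti (U : Finset ℝ) (hU : U.Nonempty)
    (p : ℝ → ℝ) (hpos : ∀ u ∈ U, 0 < p u) (hsum : ∑ u ∈ U, p u = 1)
    (h2 : ∃ u ∈ U, ∃ v ∈ U, u ≠ v)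
    (b : ℝ → ℝ) (hb : ∀ t : ℝ, b t = Real.log (∑ u ∈ U, p u * Real.exp (-t * u)))
    (g : ℝ → ℝ)
    (hg : ∀ t : ℝ, g t =
      ((∑ u ∈ U, u * p u) - (-(deriv b t))) / (t * deriv b t - b t)) :
    StrictAntiOn g (Set.Ioi (0 : ℝ)) :=
  impact_ratio_strictAnti_general U p hpos hsum h2 b hb g hg
end

section
/- As θ → ∞, d(θ) = θ·b'(θ) − b(θ) converges to −log π(u_min), where u_min is the minimum element of U. -/
open Finset Real Filter

/-!
Shifting the exponents by `m = min U` turns `b t` into `log Z t - t m` with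
`Z t = ∑ p u exp (-(u - m) t)`, and `t b' t - b t` is unchanged by adding a linear function to
`b`; so `t b' t - b t = t Z' t / Z t - log Z t`. Every term of `Z` except the one at `u = m`
decays exponentially, hence `Z t → p m` and `t Z' t → 0`.
-/

theorem mul_deriv_sub_eq_of_eq_log_sub_mul {f Z : ℝ → ℝ} {Z' m t : ℝ}
    (hf : f = fun s => log (Z s) - s * m) (hZ : HasDerivAt Z Z' t) (hZt : Z t ≠ 0) :
    t * deriv f t - f t = t * Z' / Z t - log (Z t) := by
  rw [hf, ((hZ.log hZt).fun_sub (hasDerivAt_mul_const m)).deriv]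
  field_simp
  ring

section ShiftedPartition

variable (U : Finset ℝ) (p : ℝ → ℝ) (m : ℝ)

noncomputable def shiftedPartition (t : ℝ) : ℝ := ∑ u ∈ U, p u * exp (-(u - m) * t)

variable {U p m}

theorem shiftedPartition_pos (hU : U.Nonempty) (hpos : ∀ u ∈ U, 0 < p u) (t : ℝ) :
    0 < shiftedPartition U p m t :=
  sum_pos (fun u hu => mul_pos (hpos u hu) (exp_pos _)) hU

theorem hasDerivAt_shiftedPartition (t : ℝ) :
    HasDerivAt (shiftedPartition U p m)
      (-∑ u ∈ U, p u * (u - m) * exp (-(u - m) * t)) t := by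
  rw [← sum_neg_distrib]
  refine HasDerivAt.fun_sum fun u _ => ?_
  exact ((((hasDerivAt_id' t).const_mul (-(u - m))).exp).const_mul (p u)).congr_deriv (by ring)

theorem sum_mul_exp_neg_mul_eq_shiftedPartition_mul (t : ℝ) :
    ∑ u ∈ U, p u * exp (-t * u) = shiftedPartition U p m t * exp (-(t * m)) := by
  rw [shiftedPartition, sum_mul]
  refine sum_congr rfl fun u _ => ?_
  rw [mul_assoc, ← exp_add]
  congr 2
  ring

theorem tendsto_exp_neg_mul_atTop {c : ℝ} (hc : 0 < c) :
    Tendsto (fun t => exp (-c * t)) atTop (nhds 0) := by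
  simpa using tendsto_rpow_mul_exp_neg_mul_atTop_nhds_zero 0 c hc

theorem tendsto_mul_exp_neg_mul_atTop {c : ℝ} (hc : 0 < c) :
    Tendsto (fun t => t * exp (-c * t)) atTop (nhds 0) := by
  simpa using tendsto_rpow_mul_exp_neg_mul_atTop_nhds_zero 1 c hc

theorem tendsto_shiftedPartition (hmU : m ∈ U) (hm : ∀ u ∈ U, m ≤ u) :
    Tendsto (shiftedPartition U p m) atTop (nhds (p m)) := by
  have hterm : ∀ u ∈ U, Tendsto (fun t => p u * exp (-(u - m) * t)) atTop
      (nhds (if u = m then p u else 0)) := by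
    intro u hu
    split_ifs with h
    · simp [h]
    · simpa using (tendsto_exp_neg_mul_atTop
        (sub_pos.2 ((hm u hu).lt_of_ne' h))).const_mul (p u)
  have hlim := tendsto_finsetSum U hterm
  rwa [sum_ite_eq', if_pos hmU] at hlim

theorem tendsto_mul_deriv_shiftedPartition (hm : ∀ u ∈ U, m ≤ u) :
    Tendsto (fun t => t * ∑ u ∈ U, p u * (u - m) * exp (-(u - m) * t)) atTop (nhds 0) := by
  simp_rw [mul_sum]
  have hterm : ∀ u ∈ U, Tendsto (fun t => t * (p u * (u - m) * exp (-(u - m) * t))) atTop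
      (nhds 0) := by
    intro u hu
    rcases (hm u hu).eq_or_lt with rfl | hlt
    · simp
    · simpa [mul_left_comm] using
        (tendsto_mul_exp_neg_mul_atTop (sub_pos.2 hlt)).const_mul (p u * (u - m))
  simpa using tendsto_finsetSum U hterm

end ShiftedPartition

theorem kl_tilt_tendsto_general (U : Finset ℝ) (hU : U.Nonempty)
    (p : ℝ → ℝ) (hpos : ∀ u ∈ U, 0 < p u)
    (b : ℝ → ℝ) (hb : ∀ t : ℝ, b t = Real.log (∑ u ∈ U, p u * Real.exp (-t * u))) :
    Tendsto (fun t => t * deriv b t - b t) atTop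
      (nhds (-Real.log (p (U.min' hU)))) := by
  obtain ⟨hmU, hm⟩ : U.min' hU ∈ U ∧ ∀ u ∈ U, U.min' hU ≤ u :=
    ⟨U.min'_mem hU, fun u hu => U.min'_le u hu⟩
  generalize U.min' hU = m at hmU hm ⊢
  have hZ : ∀ t, shiftedPartition U p m t ≠ 0 := fun t => (shiftedPartition_pos hU hpos t).ne'
  have hb_eq : b = fun t => log (shiftedPartition U p m t) - t * m := funext fun t => by
    rw [hb, sum_mul_exp_neg_mul_eq_shiftedPartition_mul, log_mul (hZ t) (exp_ne_zero _), log_exp]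
    ring
  have hZlim : Tendsto (shiftedPartition U p m) atTop (nhds (p m)) :=
    tendsto_shiftedPartition hmU hm
  have hpm : p m ≠ 0 := (hpos m hmU).ne'
  have hlim := ((tendsto_mul_deriv_shiftedPartition (p := p) hm).neg.div hZlim hpm).sub
    (hZlim.log hpm)
  rw [neg_zero, zero_div, zero_sub] at hlim
  refine hlim.congr fun t => ?_
  rw [mul_deriv_sub_eq_of_eq_log_sub_mul hb_eq (hasDerivAt_shiftedPartition t) (hZ t), mul_neg]
  rfl

/-- As `θ → ∞`, `d(θ) = θ·b'(θ) − b(θ)` converges to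
`−log p(u_min)`, where `u_min` is the minimum element of `U`. -/
theorem kl_tilt_tendsto (U : Finset ℝ) (hU : U.Nonempty)
    (p : ℝ → ℝ) (hpos : ∀ u ∈ U, 0 < p u) (hsum : ∑ u ∈ U, p u = 1)
    (h2 : ∃ u ∈ U, ∃ v ∈ U, u ≠ v)
    (b : ℝ → ℝ) (hb : ∀ t : ℝ, b t = Real.log (∑ u ∈ U, p u * Real.exp (-t * u))) :
    Tendsto (fun t => t * deriv b t - b t) atTop
      (nhds (-Real.log (p (U.min' hU)))) :=
  kl_tilt_tendsto_general U hU p hpos b hb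
end

section
/- Fix δ with 0 < δ < −log π(u_min). Among all probability distributions τ on U absolutely continuous with respect to π and satisfying D_KL(τ||π) ≤ δ, the expected utility Σ_u u·τ(u) is minimized uniquely by the tilted distribution τ_{θ*}, where θ* > 0 is such that D_KL(τ_{θ*}||π) = δ. -/
open Finset Real

/-- Gibbs' inequality on a finite set, with equality case. -/
lemma gibbs_fin (U : Finset ℝ) (q r : ℝ → ℝ)
    (hq0 : ∀ u ∈ U, 0 ≤ q u) (hr0 : ∀ u ∈ U, 0 < r u)
    (hqs : ∑ u ∈ U, q u = 1) (hrs : ∑ u ∈ U, r u = 1) :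
    0 ≤ ∑ u ∈ U, q u * Real.log (q u / r u) ∧
    (∑ u ∈ U, q u * Real.log (q u / r u) = 0 → ∀ u ∈ U, q u = r u) := by
  set g : ℝ → ℝ := fun u => q u * Real.log (q u / r u) - (q u - r u) with hg
  have hgnn : ∀ u ∈ U, 0 ≤ g u := by
    intro u hu
    rcases eq_or_lt_of_le (hq0 u hu) with h | h
    · simp [hg, ← h]
      linarith [hr0 u hu]
    · have hx : 0 < r u / q u := div_pos (hr0 u hu) h
      have hle := Real.log_le_sub_one_of_pos hx
      have h1 : q u * Real.log (r u / q u) ≤ q u * (r u / q u - 1) :=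
        mul_le_mul_of_nonneg_left hle h.le
      have h2 : q u * (r u / q u - 1) = r u - q u := by field_simp
      have hlog : Real.log (q u / r u) = - Real.log (r u / q u) := by
        rw [← Real.log_inv, inv_div]
      simp only [hg]
      rw [hlog]
      nlinarith
  have hsumg : ∑ u ∈ U, g u = ∑ u ∈ U, q u * Real.log (q u / r u) := by
    simp only [hg]
    rw [Finset.sum_sub_distrib, Finset.sum_sub_distrib, hqs, hrs]
    ring
  constructor
  · have := Finset.sum_nonneg hgnn
    linarith [hsumg ▸ this]
  · intro hzero u hu
    have hsz : ∑ u ∈ U, g u = 0 := by rw [hsumg, hzero]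
    have hgz : g u = 0 :=
      (Finset.sum_eq_zero_iff_of_nonneg hgnn).mp hsz u hu
    by_contra hne
    have hqpos : 0 < q u := by
      rcases eq_or_lt_of_le (hq0 u hu) with h | h
      · exfalso
        simp [hg, ← h] at hgz
        exact absurd hgz.symm (ne_of_lt (hr0 u hu))
      · exact h
    have hx : 0 < r u / q u := div_pos (hr0 u hu) hqpos
    have hxne : r u / q u ≠ 1 := by
      intro h1
      apply hne
      field_simp at h1
      linarith
    have hlt := Real.log_lt_sub_one_of_pos hx hxne
    have h1 : q u * Real.log (r u / q u) < q u * (r u / q u - 1) :=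
      (mul_lt_mul_iff_right₀ hqpos).mpr hlt
    have h2 : q u * (r u / q u - 1) = r u - q u := by field_simp
    have hlog : Real.log (q u / r u) = - Real.log (r u / q u) := by
      rw [← Real.log_inv, inv_div]
    simp only [hg] at hgz
    rw [hlog] at hgz
    nlinarith

/-- Fix `0 < δ < −log p(u_min)`. Among all probability
distributions `q` on `U` (absolutely continuous w.r.t. the strictly positive
pmf `p`) with `D_KL(q‖p) ≤ δ`, the expected utility `Σ_u u·q(u)` is minimized
uniquely by the tilted distribution `τ_{θ*}`, where `θ* > 0` satisfies
`D_KL(τ_{θ*}‖p) = δ`. -/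
theorem kl_constrained_min_is_tilt (U : Finset ℝ) (hU : U.Nonempty)
    (p : ℝ → ℝ) (hpos : ∀ u ∈ U, 0 < p u) (hsum : ∑ u ∈ U, p u = 1)
    (h2 : ∃ u ∈ U, ∃ v ∈ U, u ≠ v)
    (τ : ℝ → ℝ → ℝ)
    (hτ : ∀ t u, τ t u = p u * Real.exp (-t * u) / ∑ m ∈ U, p m * Real.exp (-t * m))
    (δ : ℝ) (hδ0 : 0 < δ) (hδ : δ < -Real.log (p (U.min' hU)))
    (θs : ℝ) (hθs : 0 < θs)
    (hθsδ : ∑ u ∈ U, τ θs u * Real.log (τ θs u / p u) = δ) :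
    ∀ q : ℝ → ℝ, (∀ u ∈ U, 0 ≤ q u) → (∑ u ∈ U, q u = 1) →
      (∑ u ∈ U, q u * Real.log (q u / p u) ≤ δ) →
      (∑ u ∈ U, u * τ θs u ≤ ∑ u ∈ U, u * q u) ∧
      ((∑ u ∈ U, u * q u = ∑ u ∈ U, u * τ θs u) → ∀ u ∈ U, q u = τ θs u) := by
  set Z : ℝ := ∑ m ∈ U, p m * Real.exp (-θs * m) with hZdef
  have hZ : 0 < Z := by
    apply Finset.sum_pos
    · intro m hm
      exact mul_pos (hpos m hm) (Real.exp_pos _)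
    · exact hU
  have hr0 : ∀ u ∈ U, 0 < τ θs u := by
    intro u hu
    rw [hτ]
    exact div_pos (mul_pos (hpos u hu) (Real.exp_pos _)) hZ
  have hrs : ∑ u ∈ U, τ θs u = 1 := by
    calc ∑ u ∈ U, τ θs u = ∑ u ∈ U, p u * Real.exp (-θs * u) / Z :=
          Finset.sum_congr rfl fun u _ => hτ θs u
      _ = (∑ u ∈ U, p u * Real.exp (-θs * u)) / Z := (Finset.sum_div _ _ _).symm
      _ = 1 := by rw [← hZdef, div_self hZ.ne']
  -- log of the ratio τ/p
  have hlogratio : ∀ u ∈ U, Real.log (τ θs u / p u) = -θs * u - Real.log Z := by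
    intro u hu
    have hp := hpos u hu
    have : τ θs u / p u = Real.exp (-θs * u) / Z := by
      rw [hτ θs u, ← hZdef]
      field_simp
    rw [this, Real.log_div (Real.exp_ne_zero _) hZ.ne', Real.log_exp]
  -- key decomposition of KL divergence
  have key : ∀ q : ℝ → ℝ, (∀ u ∈ U, 0 ≤ q u) → (∑ u ∈ U, q u = 1) →
      ∑ u ∈ U, q u * Real.log (q u / p u)
        = (∑ u ∈ U, q u * Real.log (q u / τ θs u))
          - θs * (∑ u ∈ U, u * q u) - Real.log Z := by
    intro q hq0 hqs
    have term : ∀ u ∈ U, q u * Real.log (q u / p u)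
        = q u * Real.log (q u / τ θs u) + q u * (-θs * u - Real.log Z) := by
      intro u hu
      rcases eq_or_lt_of_le (hq0 u hu) with h | h
      · simp [← h]
      · have hp := hpos u hu
        have hr := hr0 u hu
        have e1 : Real.log (q u / p u) = Real.log (q u) - Real.log (p u) :=
          Real.log_div h.ne' hp.ne'
        have e2 : Real.log (q u / τ θs u) = Real.log (q u) - Real.log (τ θs u) :=
          Real.log_div h.ne' hr.ne'
        have e3 : Real.log (τ θs u / p u) = Real.log (τ θs u) - Real.log (p u) :=
          Real.log_div hr.ne' hp.ne'
        have e4 := hlogratio u hu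
        rw [e1, e2]
        rw [e3] at e4
        rw [← e4]
        ring
    rw [Finset.sum_congr rfl term, Finset.sum_add_distrib]
    have : ∑ u ∈ U, q u * (-θs * u - Real.log Z)
        = -θs * (∑ u ∈ U, u * q u) - Real.log Z * (∑ u ∈ U, q u) := by
      rw [Finset.mul_sum, Finset.mul_sum, ← Finset.sum_sub_distrib]
      exact Finset.sum_congr rfl fun u _ => by ring
    rw [this, hqs]
    ring
  -- apply decomposition to τ θs itself
  have hKLr := key (τ θs) (fun u hu => (hr0 u hu).le) hrs
  have hselfzero : ∑ u ∈ U, τ θs u * Real.log (τ θs u / τ θs u) = 0 := by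
    apply Finset.sum_eq_zero
    intro u hu
    rw [div_self (hr0 u hu).ne', Real.log_one, mul_zero]
  rw [hθsδ, hselfzero] at hKLr
  -- hKLr : δ = 0 - θs * Er - log Z
  intro q hq0 hqs hqδ
  have hKLq := key q hq0 hqs
  obtain ⟨hGnn, hGeq⟩ := gibbs_fin U q (τ θs) hq0 hr0 hqs hrs
  set Gq := ∑ u ∈ U, q u * Real.log (q u / τ θs u) with hGq
  set Eq := ∑ u ∈ U, u * q u with hEq
  set Er := ∑ u ∈ U, u * τ θs u with hEr
  -- hKLq : KL(q‖p) = Gq - θs * Eq - log Z, and KL(q‖p) ≤ δ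
  have hmul : θs * Er ≤ θs * Eq := by
    nlinarith [hqδ, hKLq, hKLr, hGnn]
  constructor
  · exact le_of_mul_le_mul_left hmul hθs
  · intro hEeq
    have hGzero : Gq = 0 := by
      have : θs * Eq = θs * Er := by rw [hEeq]
      nlinarith [hqδ, hKLq, hKLr]
    exact hGeq hGzero
end

section
/- At the KL-constrained utility-minimizing distribution, the KL constraint is active: if τ* minimizes Σ_u u·τ(u) over distributions τ on U with D_KL(τ||π) ≤ δ, where 0 < δ < −log π(u_min), then D_KL(τ*||π) = δ. -/
open Finset Real

private lemma mul_log_div_eq {a b : ℝ} (ha : 0 ≤ a) (hb : 0 < b) :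
    a * Real.log (a / b) = a * Real.log a - a * Real.log b := by
  rcases eq_or_lt_of_le ha with h | h
  · simp [← h]
  · rw [Real.log_div (ne_of_gt h) (ne_of_gt hb), mul_sub]

/-- At the KL-constrained utility-minimizing distribution the KL
constraint is active: if `q*` minimizes `Σ_u u·q(u)` over distributions `q` on
`U` with `D_KL(q‖p) ≤ δ`, where `0 < δ < −log p(u_min)`, then
`D_KL(q*‖p) = δ`. -/
theorem kl_constraint_active (U : Finset ℝ) (hU : U.Nonempty)
    (p : ℝ → ℝ) (hpos : ∀ u ∈ U, 0 < p u) (hsum : ∑ u ∈ U, p u = 1)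
    (h2 : ∃ u ∈ U, ∃ v ∈ U, u ≠ v)
    (δ : ℝ) (hδ0 : 0 < δ) (hδ : δ < -Real.log (p (U.min' hU)))
    (qs : ℝ → ℝ) (hqs0 : ∀ u ∈ U, 0 ≤ qs u) (hqs1 : ∑ u ∈ U, qs u = 1)
    (hqskl : ∑ u ∈ U, qs u * Real.log (qs u / p u) ≤ δ)
    (hmin : ∀ q : ℝ → ℝ, (∀ u ∈ U, 0 ≤ q u) → (∑ u ∈ U, q u = 1) →
      (∑ u ∈ U, q u * Real.log (q u / p u) ≤ δ) →
      ∑ u ∈ U, u * qs u ≤ ∑ u ∈ U, u * q u) :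
    ∑ u ∈ U, qs u * Real.log (qs u / p u) = δ := by
  set m := U.min' hU with hm
  have hmU : m ∈ U := U.min'_mem hU
  refine le_antisymm hqskl ?_
  by_contra hlt
  push_neg at hlt
  -- Step 1 : the expected utility of qs is strictly above m.
  set E := ∑ u ∈ U, u * qs u with hE
  have hEm : m < E := by
    by_contra hEm
    push_neg at hEm
    -- then Σ (u - m) * qs u ≤ 0 with nonneg terms, so qs is the point mass at m
    have hsum0 : ∑ u ∈ U, (u - m) * qs u = 0 := by
      have hle : ∑ u ∈ U, (u - m) * qs u ≤ 0 := by
        have : ∑ u ∈ U, (u - m) * qs u = E - m := by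
          simp [sub_mul, Finset.sum_sub_distrib, ← Finset.mul_sum, hqs1, hE]
        linarith
      have hge : 0 ≤ ∑ u ∈ U, (u - m) * qs u :=
        Finset.sum_nonneg fun u hu =>
          mul_nonneg (by linarith [U.min'_le u hu]) (hqs0 u hu)
      linarith
    have hz : ∀ u ∈ U, (u - m) * qs u = 0 :=
      (Finset.sum_eq_zero_iff_of_nonneg fun u hu =>
        mul_nonneg (by linarith [U.min'_le u hu]) (hqs0 u hu)).mp hsum0
    have hq0 : ∀ u ∈ U, u ≠ m → qs u = 0 := by
      intro u hu hne
      have hlt' : m < u := lt_of_le_of_ne (U.min'_le u hu) (Ne.symm hne)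
      have := hz u hu
      rcases mul_eq_zero.mp this with h | h
      · exact absurd h (by linarith)
      · exact h
    have hqm : qs m = 1 := by
      have : ∑ u ∈ U, qs u = qs m := by
        refine Finset.sum_eq_single_of_mem m hmU fun u hu hne => hq0 u hu hne
      linarith [hqs1]
    have hkl : ∑ u ∈ U, qs u * Real.log (qs u / p u) = -Real.log (p m) := by
      rw [Finset.sum_eq_single_of_mem m hmU fun u hu hne => by simp [hq0 u hu hne]]
      rw [hqm, one_mul, one_div, Real.log_inv]
    rw [hkl] at hqskl
    linarith
  -- Step 2 : continuity argument.  Define the perturbation family.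
  set x : ℝ → ℝ → ℝ := fun u t => (1 - t) * qs u + t * (if u = m then 1 else 0) with hx
  set F : ℝ → ℝ := fun t => ∑ u ∈ U, (x u t * Real.log (x u t) - x u t * Real.log (p u))
    with hF
  have hFc : Continuous F := by
    apply continuous_finset_sum
    intro u _
    have hxc : Continuous fun t => x u t := by
      simp only [hx]
      fun_prop
    exact (Real.continuous_mul_log.comp hxc).sub (hxc.mul continuous_const)
  have hF0 : F 0 = ∑ u ∈ U, qs u * Real.log (qs u / p u) := by
    refine Finset.sum_congr rfl fun u hu => ?_
    simp only [hx, sub_zero, one_mul, zero_mul, add_zero]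
    exact (mul_log_div_eq (hqs0 u hu) (hpos u hu)).symm
  have hF0lt : F 0 < δ := by rw [hF0]; exact hlt
  -- find small positive t with F t < δ
  have htend : Filter.Tendsto F (nhdsWithin 0 (Set.Ioi 0)) (nhds (F 0)) :=
    (hFc.tendsto 0).mono_left nhdsWithin_le_nhds
  have hev1 : ∀ᶠ t in nhdsWithin 0 (Set.Ioi 0), F t < δ :=
    htend.eventually (Filter.Tendsto.eventually_lt_const hF0lt Filter.tendsto_id)
  have hev2 : ∀ᶠ t in nhdsWithin 0 (Set.Ioi 0), t ∈ Set.Ioc (0:ℝ) 1 :=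
    Ioc_mem_nhdsGT_of_mem (by norm_num)
  obtain ⟨t, htF, ht0, ht1⟩ :
      ∃ t, F t < δ ∧ 0 < t ∧ t ≤ 1 := by
    obtain ⟨t, h1, h2'⟩ := (hev1.and hev2).exists
    exact ⟨t, h1, h2'.1, h2'.2⟩
  -- q is the perturbed distribution
  set q : ℝ → ℝ := fun u => x u t with hq
  have hq0' : ∀ u ∈ U, 0 ≤ q u := by
    intro u hu
    have : (0:ℝ) ≤ (if u = m then (1:ℝ) else 0) := by positivity
    have := mul_nonneg (le_of_lt ht0) this
    have h1t : (0:ℝ) ≤ 1 - t := by linarith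
    exact add_nonneg (mul_nonneg h1t (hqs0 u hu)) (by assumption)
  have hind : ∑ u ∈ U, (if u = m then (1:ℝ) else 0) = 1 := by
    rw [Finset.sum_ite_eq' U m (fun _ => (1:ℝ))]
    simp [hmU]
  have hq1 : ∑ u ∈ U, q u = 1 := by
    simp only [hq, hx, Finset.sum_add_distrib, ← Finset.mul_sum, hqs1, hind]
    ring
  have hqkl : ∑ u ∈ U, q u * Real.log (q u / p u) ≤ δ := by
    have : ∑ u ∈ U, q u * Real.log (q u / p u) = F t := by
      refine Finset.sum_congr rfl fun u hu => ?_
      exact mul_log_div_eq (hq0' u hu) (hpos u hu)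
    rw [this]; exact le_of_lt htF
  have hutil : ∑ u ∈ U, u * q u = (1 - t) * E + t * m := by
    simp only [hq, hx, mul_add, Finset.sum_add_distrib]
    congr 1
    · rw [hE, Finset.mul_sum]
      exact Finset.sum_congr rfl fun u _ => by ring
    · rw [show ∑ u ∈ U, u * (t * if u = m then (1:ℝ) else 0)
          = ∑ u ∈ U, (if u = m then t * m else 0) from
        Finset.sum_congr rfl fun u hu => by split <;> simp_all <;> ring]
      rw [Finset.sum_ite_eq' U m (fun _ => t * m)]
      simp [hmU]
  have := hmin q hq0' hq1 hqkl
  rw [hutil] at this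
  -- E ≤ (1-t) E + t m  ⟹  t E ≤ t m ⟹ E ≤ m, contradiction
  nlinarith
end

section
/- For any distribution τ with mean u_τ ≤ u_π − ε (for 0 < ε < u_π − u_min) and finite D_KL(τ||π), the ratio (u_π − u_τ)/D_KL(τ||π) is at most (u_π − u_{θ_min})/d(θ_min), where θ_min > 0 satisfies u_{θ_min} = u_π − ε; i.e., τ_{θ_min} maximizes the impact-to-divergence ratio. -/
/-!
Write `τ` for the exponential tilt of `p` at `θ = θ_min` and `Z(θ)` for its normaliser. Since
`log (τ u / p u) = -θ u - log Z(θ)` is affine in `u`, relative entropy satisfies the Pythagorean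
identity `D(q‖p) = D(q‖τ) + D(τ‖p) + θ (u_τ - u_q)` for every distribution `q`. Taking `q = p`
gives `D(τ‖p) ≤ θ ε`; for a general `q` with `u_q ≤ u_τ` it gives
`D(q‖p) ≥ D(τ‖p) + θ (u_p - u_q - ε)`. These two bounds, together with `D(τ‖p) > 0` (the means of
`τ` and `p` differ), are exactly what `(u_p - u_q) / D(q‖p) ≤ ε / D(τ‖p)` needs after
cross-multiplying.
-/

open Finset Real InformationTheory

noncomputable section

def relEntropy (U : Finset ℝ) (q p : ℝ → ℝ) : ℝ := ∑ u ∈ U, q u * log (q u / p u)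

def weightedMean (U : Finset ℝ) (q : ℝ → ℝ) : ℝ := ∑ u ∈ U, u * q u

def partitionFn (U : Finset ℝ) (p : ℝ → ℝ) (θ : ℝ) : ℝ :=
  ∑ u ∈ U, p u * exp (-θ * u)

def tilt (U : Finset ℝ) (p : ℝ → ℝ) (θ : ℝ) (u : ℝ) : ℝ :=
  p u * exp (-θ * u) / partitionFn U p θ

end

lemma mul_log_div_add_sub_eq_mul_klFun (a : ℝ) {t : ℝ} (ht : t ≠ 0) :
    a * log (a / t) + t - a = t * klFun (a / t) := by
  rw [klFun_apply]
  field_simp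

lemma mul_klFun_div_nonneg {a t : ℝ} (ha : 0 ≤ a) (ht : 0 < t) : 0 ≤ t * klFun (a / t) :=
  mul_nonneg ht.le (klFun_nonneg (div_nonneg ha ht.le))

section Gibbs

variable {U : Finset ℝ} {q p : ℝ → ℝ}

lemma relEntropy_eq_sum_mul_klFun (hp : ∀ u ∈ U, 0 < p u)
    (hsum : ∑ u ∈ U, q u = ∑ u ∈ U, p u) :
    relEntropy U q p = ∑ u ∈ U, p u * klFun (q u / p u) := by
  rw [← sum_congr rfl fun u hu => mul_log_div_add_sub_eq_mul_klFun (q u) (hp u hu).ne',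
    sum_sub_distrib, sum_add_distrib, hsum, relEntropy]
  ring

lemma relEntropy_nonneg (hq : ∀ u ∈ U, 0 ≤ q u) (hp : ∀ u ∈ U, 0 < p u)
    (hsum : ∑ u ∈ U, q u = ∑ u ∈ U, p u) : 0 ≤ relEntropy U q p := by
  rw [relEntropy_eq_sum_mul_klFun hp hsum]
  exact sum_nonneg fun u hu => mul_klFun_div_nonneg (hq u hu) (hp u hu)

lemma relEntropy_pos (hq : ∀ u ∈ U, 0 ≤ q u) (hp : ∀ u ∈ U, 0 < p u)
    (hsum : ∑ u ∈ U, q u = ∑ u ∈ U, p u) (hne : ∃ u ∈ U, q u ≠ p u) :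
    0 < relEntropy U q p := by
  obtain ⟨u, hu, hqp⟩ := hne
  have hterm_pos : 0 < p u * klFun (q u / p u) := by
    have hratio : 0 ≤ q u / p u := div_nonneg (hq u hu) (hp u hu).le
    have hratio_ne : q u / p u ≠ 1 := by rwa [Ne, div_eq_one_iff_eq (hp u hu).ne']
    exact mul_pos (hp u hu) ((klFun_nonneg hratio).lt_of_ne'
      (mt (klFun_eq_zero_iff hratio).mp hratio_ne))
  rw [relEntropy_eq_sum_mul_klFun hp hsum]
  exact sum_pos' (fun v hv => mul_klFun_div_nonneg (hq v hv) (hp v hv)) ⟨u, hu, hterm_pos⟩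

lemma relEntropy_self : relEntropy U p p = 0 :=
  sum_eq_zero fun u _ => by rcases eq_or_ne (p u) 0 with h | h <;> simp [h]

end Gibbs

section Tilt

variable {U : Finset ℝ} {p : ℝ → ℝ}

lemma partitionFn_pos (hU : U.Nonempty) (hp : ∀ u ∈ U, 0 < p u) (θ : ℝ) :
    0 < partitionFn U p θ :=
  sum_pos (fun u hu => mul_pos (hp u hu) (exp_pos _)) hU

lemma tilt_pos (hU : U.Nonempty) (hp : ∀ u ∈ U, 0 < p u) (θ : ℝ) {u : ℝ} (hu : u ∈ U) :
    0 < tilt U p θ u :=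
  div_pos (mul_pos (hp u hu) (exp_pos _)) (partitionFn_pos hU hp θ)

lemma sum_tilt (hU : U.Nonempty) (hp : ∀ u ∈ U, 0 < p u) (θ : ℝ) :
    ∑ u ∈ U, tilt U p θ u = 1 := by
  simp only [tilt, ← sum_div]
  exact div_self (partitionFn_pos hU hp θ).ne'

lemma hasDerivAt_log_partitionFn (hU : U.Nonempty) (hp : ∀ u ∈ U, 0 < p u) (θ : ℝ) :
    HasDerivAt (fun t => log (partitionFn U p t)) (-weightedMean U (tilt U p θ)) θ := by
  have hZ : HasDerivAt (partitionFn U p) (∑ u ∈ U, p u * (exp (-θ * u) * -u)) θ :=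
    HasDerivAt.fun_sum fun u _ =>
      (((hasDerivAt_id θ).neg.mul_const u).exp.const_mul (p u)).congr_deriv (by simp)
  convert hZ.log (partitionFn_pos hU hp θ).ne' using 1
  simp only [weightedMean, tilt, sum_div, ← sum_neg_distrib]
  exact sum_congr rfl fun u _ => by ring

lemma relEntropy_tilt_right (hU : U.Nonempty) (hp : ∀ u ∈ U, 0 < p u) (θ : ℝ) {q : ℝ → ℝ}
    (hq : ∑ u ∈ U, q u = 1) :
    relEntropy U q (tilt U p θ) =
      relEntropy U q p + θ * weightedMean U q + log (partitionFn U p θ) := by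
  have hZ := partitionFn_pos hU hp θ
  rw [relEntropy, relEntropy, weightedMean, mul_sum, ← one_mul (log _), ← hq, sum_mul,
    ← sum_add_distrib, ← sum_add_distrib]
  refine sum_congr rfl fun u hu => ?_
  rcases eq_or_ne (q u) 0 with h | h
  · simp [h]
  · have hpu := hp u hu
    rw [log_div h (tilt_pos hU hp θ hu).ne', log_div h hpu.ne', tilt,
      log_div (by positivity) hZ.ne', log_mul hpu.ne' (exp_pos _).ne', log_exp]
    ring

lemma relEntropy_tilt_left (hU : U.Nonempty) (hp : ∀ u ∈ U, 0 < p u) (θ : ℝ) :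
    relEntropy U (tilt U p θ) p =
      -θ * weightedMean U (tilt U p θ) - log (partitionFn U p θ) := by
  have h := relEntropy_tilt_right hU hp θ (sum_tilt hU hp θ)
  rw [relEntropy_self] at h
  linarith

lemma relEntropy_tilt_add_le (hU : U.Nonempty) (hp : ∀ u ∈ U, 0 < p u) (θ : ℝ) {q : ℝ → ℝ}
    (hq0 : ∀ u ∈ U, 0 ≤ q u) (hq1 : ∑ u ∈ U, q u = 1) :
    relEntropy U (tilt U p θ) p + θ * (weightedMean U (tilt U p θ) - weightedMean U q) ≤
      relEntropy U q p := by
  have h := relEntropy_nonneg hq0 (fun u hu => tilt_pos hU hp θ hu) (by rw [hq1, sum_tilt hU hp θ])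
  rw [relEntropy_tilt_right hU hp θ hq1] at h
  rw [relEntropy_tilt_left hU hp θ]
  linarith

end Tilt

lemma div_le_div_of_le_mul_of_add_mul_le {A K D θ ε : ℝ} (hD : 0 < D) (hε : 0 < ε)
    (hDθ : D ≤ θ * ε) (hA : ε ≤ A) (hK : D + θ * (A - ε) ≤ K) : A / K ≤ ε / D := by
  have hθ : 0 ≤ θ := by nlinarith
  have hK_pos : 0 < K := by nlinarith
  rw [div_le_div_iff₀ hK_pos hD]
  nlinarith [mul_le_mul_of_nonneg_right hDθ (sub_nonneg.mpr hA)]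

theorem tilt_maximizes_impact_ratio_general (U : Finset ℝ) (hU : U.Nonempty)
    (p : ℝ → ℝ) (hpos : ∀ u ∈ U, 0 < p u) (hsum : ∑ u ∈ U, p u = 1)
    (b : ℝ → ℝ) (hb : ∀ t : ℝ, b t = Real.log (∑ u ∈ U, p u * Real.exp (-t * u)))
    (ε : ℝ) (hε0 : 0 < ε)
    (θmin : ℝ)
    (hθmean : -(deriv b θmin) = (∑ u ∈ U, u * p u) - ε)
    (q : ℝ → ℝ) (hq0 : ∀ u ∈ U, 0 ≤ q u) (hq1 : ∑ u ∈ U, q u = 1)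
    (hqmean : ∑ u ∈ U, u * q u ≤ (∑ u ∈ U, u * p u) - ε) :
    ((∑ u ∈ U, u * p u) - ∑ u ∈ U, u * q u) /
        (∑ u ∈ U, q u * Real.log (q u / p u)) ≤
      ((∑ u ∈ U, u * p u) - (-(deriv b θmin))) /
        (θmin * deriv b θmin - b θmin) := by
  change weightedMean U q ≤ weightedMean U p - ε at hqmean
  have hderiv : deriv b θmin = -weightedMean U (tilt U p θmin) := by
    rw [show b = fun t => log (partitionFn U p t) from funext hb]
    exact (hasDerivAt_log_partitionFn hU hpos θmin).deriv
  have hτmean : weightedMean U (tilt U p θmin) = weightedMean U p - ε := by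
    rw [← neg_neg (weightedMean U (tilt U p θmin)), ← hderiv, hθmean]; rfl
  have hdiv : θmin * deriv b θmin - b θmin = relEntropy U (tilt U p θmin) p := by
    rw [hderiv, hb θmin, relEntropy_tilt_left hU hpos θmin, partitionFn]
    ring
  have hτ_ne_p : ∃ u ∈ U, tilt U p θmin u ≠ p u := by
    by_contra! h
    have : weightedMean U (tilt U p θmin) = weightedMean U p :=
      sum_congr rfl fun u hu => by rw [h u hu]
    linarith
  have hdiv_pos := relEntropy_pos (fun u hu => (tilt_pos hU hpos θmin hu).le) hpos
    (by rw [sum_tilt hU hpos θmin, hsum]) hτ_ne_p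
  have hp_bound := relEntropy_tilt_add_le hU hpos θmin (fun u hu => (hpos u hu).le) hsum
  have hq_bound := relEntropy_tilt_add_le hU hpos θmin hq0 hq1
  rw [relEntropy_self, hτmean] at hp_bound
  rw [hτmean] at hq_bound
  change (weightedMean U p - weightedMean U q) / relEntropy U q p ≤ _
  rw [hdiv, hθmean, sub_sub_cancel]
  exact div_le_div_of_le_mul_of_add_mul_le (θ := θmin) hdiv_pos hε0 (by linarith) (by linarith)
    (by linarith)

/-- For any distribution `q` with mean `u_q ≤ u_p − ε`
(for `0 < ε < u_p − u_min`) and finite KL divergence from `p`, the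
impact-to-divergence ratio `(u_p − u_q)/D_KL(q‖p)` is at most
`(u_p − u_{θmin})/d(θmin)`, where `θmin > 0` satisfies `u_{θmin} = u_p − ε`;
i.e. the tilt `τ_{θmin}` maximizes the impact-to-divergence ratio. -/
theorem tilt_maximizes_impact_ratio (U : Finset ℝ) (hU : U.Nonempty)
    (p : ℝ → ℝ) (hpos : ∀ u ∈ U, 0 < p u) (hsum : ∑ u ∈ U, p u = 1)
    (h2 : ∃ u ∈ U, ∃ v ∈ U, u ≠ v)
    (b : ℝ → ℝ) (hb : ∀ t : ℝ, b t = Real.log (∑ u ∈ U, p u * Real.exp (-t * u)))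
    (ε : ℝ) (hε0 : 0 < ε) (hε : ε < (∑ u ∈ U, u * p u) - U.min' hU)
    (θmin : ℝ) (hθmin : 0 < θmin)
    (hθmean : -(deriv b θmin) = (∑ u ∈ U, u * p u) - ε)
    (q : ℝ → ℝ) (hq0 : ∀ u ∈ U, 0 ≤ q u) (hq1 : ∑ u ∈ U, q u = 1)
    (hqmean : ∑ u ∈ U, u * q u ≤ (∑ u ∈ U, u * p u) - ε) :
    ((∑ u ∈ U, u * p u) - ∑ u ∈ U, u * q u) /
        (∑ u ∈ U, q u * Real.log (q u / p u)) ≤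
      ((∑ u ∈ U, u * p u) - (-(deriv b θmin))) /
        (θmin * deriv b θmin - b θmin) :=
  tilt_maximizes_impact_ratio_general U hU p hpos hsum b hb ε hε0 θmin hθmean q hq0 hq1 hqmean
end
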